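/- arXiv:2507.07525 — 5 statements merged into one kernel-verified Lean document; each statement's English description precedes it below -/
import Mathlib

section
/- Fix constants c > 0 and λ > 0 and a point x ∈ ℝ. Define Q(x,t) = e^{-λ t} / (π·√(c²t² − x²)) + (λ·e^{-λ t}/(2c))·L₀((λ/c)·√(c²t² − x²)) for t > |x|/c. Then Q(x,t) = (1/(2c))·√(λ/(2π t)) + O(t^{-1}) as t → ∞; that is, there exist constants C > 0 and T > |x|/c such that for all t ≥ T, |Q(x,t) − (1/(2c))·√(λ/(2π t))| ≤ C·t^{-1}. -/
/-!
Integrating the series termwise gives `L₀(z) = (2/π) ∫₀^{π/2} sinh (z cos θ) dθ`. With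
`cos 2s = 1 - 2 sin² s`, the growing half of the integrand contributes
`e^z · 2 ∫₀^{π/4} e^{-2z sin² s} ds`, and Laplace's method (replace `sin² s` by `s²`, then extend
the Gaussian integral to `(0, ∞)`) gives `e^{-z} L₀(z) = 1/√(2πz) + O(1/z)`. In `Q(x,t)` the
argument is `z = (λ/c)√(c²t² - x²) = λt - O(1/t)`, so `e^{-λt} L₀(z) = 1/√(2πλt) + O(1/t)`, and
the first term of `Q` is `O(e^{-λt}/t)`.
-/

open Real Filter Topology

/-- Modified Bessel function of the first kind of nonnegative integer order `n`,
defined by its everywhere-convergent power series. -/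
noncomputable def besselI (n : ℕ) (z : ℝ) : ℝ :=
  ∑' k : ℕ, (1 / (Nat.factorial k * Nat.factorial (k + n) : ℝ)) * (z / 2) ^ (2 * k + n)

/-- Modified Struve function of order zero, defined by its power series. -/
noncomputable def struveL0 (z : ℝ) : ℝ :=
  ∑' k : ℕ, (1 / (Real.Gamma ((k : ℝ) + 3 / 2)) ^ 2) * (z / 2) ^ (2 * k + 1)

open MeasureTheory Set
open scoped Nat

theorem integral_cos_pow_odd (k : ℕ) :
    ∫ θ in (0 : ℝ)..π / 2, cos θ ^ (2 * k + 1) = (2 * k)‼ / (2 * k + 1)‼ := by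
  induction k with
  | zero => simp
  | succ k ih =>
    rw [show 2 * (k + 1) + 1 = 2 * k + 1 + 2 by ring, integral_cos_pow, ih,
      show 2 * (k + 1) = 2 * k + 2 by ring, Nat.doubleFactorial_add_two,
      Nat.doubleFactorial_add_two]
    simp only [cos_pi_div_two, sin_zero, ne_eq, add_eq_zero, one_ne_zero, and_false,
      not_false_eq_true, zero_pow, zero_mul, mul_zero, sub_self, zero_div, zero_add]
    push_cast
    field_simp
    ring

theorem one_div_Gamma_sq_mul_half_pow (k : ℕ) (z : ℝ) :
    1 / Gamma (k + 3 / 2) ^ 2 * (z / 2) ^ (2 * k + 1) =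
      2 / π * ∫ θ in (0 : ℝ)..π / 2, (z * cos θ) ^ (2 * k + 1) / (2 * k + 1)! := by
  have hΓ : Gamma (k + 3 / 2) = (2 * k + 1 : ℕ)‼ * √π / 2 ^ (k + 1) := by
    rw [← Real.Gamma_nat_add_one_add_half]; ring_nf
  have hfact : ((2 * k + 1)! : ℝ) = (2 * k + 1)‼ * (2 * k)‼ := by
    exact_mod_cast Nat.factorial_eq_mul_doubleFactorial (2 * k)
  simp_rw [mul_pow, mul_div_right_comm _ (cos _ ^ _)]
  rw [intervalIntegral.integral_const_mul, integral_cos_pow_odd, hΓ, hfact]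
  have hπ : √π ^ 2 = π := sq_sqrt pi_pos.le
  have : (0 : ℝ) < (2 * k)‼ := by exact_mod_cast Nat.doubleFactorial_pos _
  have : (0 : ℝ) < (2 * k + 1)‼ := by exact_mod_cast Nat.doubleFactorial_pos _
  rw [div_pow z]
  field_simp
  rw [hπ]
  ring

theorem struveL0_eq_integral_sinh (z : ℝ) :
    struveL0 z = 2 / π * ∫ θ in (0 : ℝ)..π / 2, sinh (z * cos θ) := by
  have hsum : HasSum (fun k : ℕ => ∫ θ in (0 : ℝ)..π / 2, (z * cos θ) ^ (2 * k + 1) / (2 * k + 1)!)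
      (∫ θ in (0 : ℝ)..π / 2, sinh (z * cos θ)) := by
    refine intervalIntegral.hasSum_integral_of_dominated_convergence
      (fun k _ => |z| ^ (2 * k + 1) / (2 * k + 1)!)
      (fun _ => (by fun_prop : Continuous _).aestronglyMeasurable) (fun _ => ae_of_all _ ?_)
      (ae_of_all _ fun _ _ => (Real.hasSum_sinh |z|).summable) intervalIntegrable_const
      (ae_of_all _ fun θ _ => Real.hasSum_sinh _)
    intro θ _
    rw [norm_div, norm_pow, Real.norm_natCast, norm_mul, Real.norm_eq_abs, Real.norm_eq_abs]
    gcongr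
    exact mul_le_of_le_one_right (abs_nonneg z) (abs_cos_le_one θ)
  rw [struveL0, ← (hsum.mul_left (2 / π)).tsum_eq]
  exact tsum_congr fun k => one_div_Gamma_sq_mul_half_pow k z

theorem integral_exp_mul_cos_eq (z : ℝ) :
    ∫ θ in (0 : ℝ)..π / 2, exp (z * cos θ) =
      2 * exp z * ∫ s in (0 : ℝ)..π / 4, exp (-(2 * z) * sin s ^ 2) := by
  have h : ∀ s, exp z * exp (-(2 * z) * sin s ^ 2) = exp (z * cos (2 * s)) := fun s => by
    rw [← exp_add, cos_two_mul, cos_sq']; ring_nf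
  rw [mul_assoc, ← intervalIntegral.integral_const_mul]
  simp_rw [h]
  rw [intervalIntegral.mul_integral_comp_mul_left (f := fun θ => exp (z * cos θ))]
  ring_nf

theorem exp_neg_mul_struveL0_eq (z : ℝ) :
    exp (-z) * struveL0 z =
      2 / π * (∫ s in (0 : ℝ)..π / 4, exp (-(2 * z) * sin s ^ 2)) -
        exp (-z) / π * ∫ θ in (0 : ℝ)..π / 2, exp (-(z * cos θ)) := by
  have hsinh : ∫ θ in (0 : ℝ)..π / 2, sinh (z * cos θ) =
      ((∫ θ in (0 : ℝ)..π / 2, exp (z * cos θ)) -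
        ∫ θ in (0 : ℝ)..π / 2, exp (-(z * cos θ))) / 2 := by
    simp_rw [sinh_eq]
    rw [intervalIntegral.integral_div, intervalIntegral.integral_sub
      (Continuous.intervalIntegrable (by fun_prop) _ _)
      (Continuous.intervalIntegrable (by fun_prop) _ _)]
  rw [struveL0_eq_integral_sinh, hsinh, integral_exp_mul_cos_eq]
  set G := ∫ s in (0 : ℝ)..π / 4, exp (-(2 * z) * sin s ^ 2)
  have : exp (-z) * exp z = 1 := by rw [← exp_add, neg_add_cancel, exp_zero]
  linear_combination (2 / π * G) * this

theorem sq_mul_exp_neg_le {y : ℝ} (hy : 0 ≤ y) : y ^ 2 * exp (-y) ≤ 2 := by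
  have h := pow_div_factorial_le_exp (x := y) hy 2
  rw [Nat.factorial_two, Nat.cast_two] at h
  rw [exp_neg, mul_inv_le_iff₀ (exp_pos y)]
  linarith

theorem exp_neg_sub_exp_neg_le (a b : ℝ) : exp (-a) - exp (-b) ≤ (b - a) * exp (-a) := by
  have h : exp (-b) = exp (-a) * exp (a - b) := by rw [← exp_add]; ring_nf
  rw [h]
  nlinarith [add_one_le_exp (a - b), exp_pos (-a)]

theorem abs_exp_neg_mul_sin_sq_sub_le {b s : ℝ} (hb : 0 < b) (hs0 : 0 ≤ s) (hs : s ≤ π / 2) :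
    |exp (-b * sin s ^ 2) - exp (-b * s ^ 2)| ≤ 11 / b := by
  have hsin0 : 0 ≤ sin s := sin_nonneg_of_nonneg_of_le_pi hs0 (by linarith [pi_pos])
  have hsin_le : sin s ≤ s := sin_le hs0
  have hsin_ge : s / 2 ≤ sin s := by
    have h := mul_le_sin hs0 hs
    have : s / 2 ≤ 2 / π * s := by
      rw [div_mul_eq_mul_div, le_div_iff₀ pi_pos]; nlinarith [pi_lt_four]
    linarith
  have hgap : b * s ^ 2 - b * sin s ^ 2 ≤ b * s ^ 4 / 3 := by
    have h := sin_ge_sub_cube hs0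
    have : s ^ 2 - sin s ^ 2 ≤ s ^ 4 / 3 := by nlinarith
    nlinarith
  have hsq_le : sin s ^ 2 ≤ s ^ 2 := pow_le_pow_left₀ hsin0 hsin_le 2
  have hsq_ge : (s / 2) ^ 2 ≤ sin s ^ 2 := pow_le_pow_left₀ (by positivity) hsin_ge 2
  have hexp : exp (-b * sin s ^ 2) ≤ exp (-(b * s ^ 2 / 4)) :=
    exp_le_exp.mpr (by linarith [mul_le_mul_of_nonneg_left hsq_ge hb.le])
  set y := b * s ^ 2 / 4
  have hy : 0 ≤ y := by positivity
  rw [abs_of_nonneg (sub_nonneg.mpr (exp_le_exp.mpr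
    (by linarith [mul_le_mul_of_nonneg_left hsq_le hb.le])))]
  calc exp (-b * sin s ^ 2) - exp (-b * s ^ 2)
      ≤ (b * s ^ 2 - b * sin s ^ 2) * exp (-b * sin s ^ 2) := by
        simpa only [neg_mul] using exp_neg_sub_exp_neg_le (b * sin s ^ 2) (b * s ^ 2)
    _ ≤ b * s ^ 4 / 3 * exp (-y) := by gcongr
    _ = 16 / 3 * (y ^ 2 * exp (-y)) / b := by field_simp; ring
    _ ≤ 16 / 3 * 2 / b := by gcongr; exact sq_mul_exp_neg_le hy
    _ ≤ 11 / b := by gcongr; norm_num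

theorem integral_exp_neg_mul_sq_Ioi_pi_div_four_le {b : ℝ} (hb : 0 < b) :
    ∫ s in Ioi (π / 4), exp (-b * s ^ 2) ≤ 2 / b := by
  have hlin : IntegrableOn (fun s => exp (-(b / 2) * s)) (Ioi (π / 4)) :=
    integrableOn_exp_mul_Ioi (by linarith) _
  calc ∫ s in Ioi (π / 4), exp (-b * s ^ 2)
      ≤ ∫ s in Ioi (π / 4), exp (-(b / 2) * s) := by
        refine setIntegral_mono_on ((integrable_exp_neg_mul_sq hb).integrableOn) hlin
          measurableSet_Ioi fun s hs => exp_le_exp.mpr ?_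
        have : 1 / 2 < s := lt_trans (by linarith [pi_gt_three]) hs
        nlinarith [mul_nonneg (mul_nonneg hb.le (by linarith : (0 : ℝ) ≤ s))
          (sub_nonneg.mpr this.le)]
    _ = 2 / b * exp (-(b / 2) * (π / 4)) := by
        rw [integral_exp_mul_Ioi (by linarith)]; field_simp
    _ ≤ 2 / b := by
        apply mul_le_of_le_one_right (by positivity)
        exact exp_le_one_iff.mpr (by nlinarith [pi_pos])

theorem abs_integral_exp_neg_mul_sin_sq_sub_le {b : ℝ} (hb : 0 < b) :
    |(∫ s in (0 : ℝ)..π / 4, exp (-b * sin s ^ 2)) - √(π / b) / 2| ≤ 13 / b := by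
  have hπ : 0 ≤ π / 4 := by positivity
  have hgauss := integrable_exp_neg_mul_sq hb
  rw [← integral_gaussian_Ioi, ← intervalIntegral.integral_interval_add_Ioi (b := π / 4)
    hgauss.integrableOn hgauss.integrableOn, sub_add_eq_sub_sub, ← intervalIntegral.integral_sub
    (Continuous.intervalIntegrable (by fun_prop) _ _) hgauss.intervalIntegrable]
  have hmain : ‖∫ s in (0 : ℝ)..π / 4, (exp (-b * sin s ^ 2) - exp (-b * s ^ 2))‖ ≤ 11 / b := by
    refine (intervalIntegral.norm_integral_le_of_norm_le_const (C := 11 / b)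
      fun s hs => ?_).trans ?_
    · rw [uIoc_of_le hπ] at hs
      exact abs_exp_neg_mul_sin_sq_sub_le hb hs.1.le (by linarith [hs.2, pi_pos])
    · rw [sub_zero, abs_of_nonneg hπ]
      exact mul_le_of_le_one_right (by positivity) (by linarith [pi_lt_four])
  have htail0 : 0 ≤ ∫ s in Ioi (π / 4), exp (-b * s ^ 2) :=
    setIntegral_nonneg measurableSet_Ioi fun _ _ => (exp_pos _).le
  have htail := integral_exp_neg_mul_sq_Ioi_pi_div_four_le hb
  rw [Real.norm_eq_abs] at hmain
  calc _ ≤ |∫ s in (0 : ℝ)..π / 4, (exp (-b * sin s ^ 2) - exp (-b * s ^ 2))|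
        + |∫ s in Ioi (π / 4), exp (-b * s ^ 2)| := abs_sub _ _
    _ ≤ 11 / b + 2 / b := by rw [abs_of_nonneg htail0]; gcongr
    _ = 13 / b := by ring

theorem sqrt_div_mul_eq_mul_one_div_sqrt {a b t : ℝ} (ha : 0 < a) :
    √(a / (b * t)) = a * (1 / √(b * (a * t))) := by
  rw [← mul_div_mul_left a (b * t) ha.ne', show a * (b * t) = b * (a * t) by ring, ← sq,
    sqrt_div (sq_nonneg a), sqrt_sq ha.le, mul_one_div]

theorem abs_exp_neg_mul_struveL0_sub_le {z : ℝ} (hz : 0 < z) :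
    |exp (-z) * struveL0 z - 1 / √(2 * π * z)| ≤ 5 / z := by
  have hπ := pi_pos
  have hR : ∫ θ in (0 : ℝ)..π / 2, exp (-(z * cos θ)) ∈ Icc 0 (π / 2) := by
    have hint : IntervalIntegrable (fun θ => exp (-(z * cos θ))) volume 0 (π / 2) :=
      Continuous.intervalIntegrable (by fun_prop) _ _
    refine ⟨intervalIntegral.integral_nonneg (by positivity) fun _ _ => (exp_pos _).le, ?_⟩
    calc _ ≤ ∫ _ in (0 : ℝ)..π / 2, (1 : ℝ) :=
          intervalIntegral.integral_mono_on (by positivity) hint intervalIntegrable_const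
            fun θ hθ => exp_le_one_iff.mpr (neg_nonpos.mpr (mul_nonneg hz.le
              (cos_nonneg_of_mem_Icc ⟨by linarith [hθ.1], hθ.2⟩)))
      _ = π / 2 := by simp
  have hE : exp (-z) ≤ 1 / z := by
    rw [exp_neg, one_div]; exact inv_anti₀ hz (by linarith [add_one_le_exp z])
  have hlaplace := abs_integral_exp_neg_mul_sin_sq_sub_le (by positivity : 0 < 2 * z)
  have hgauss : 1 / √(2 * π * z) = 2 / π * (√(π / (2 * z)) / 2) := by
    rw [sqrt_div_mul_eq_mul_one_div_sqrt hπ, ← mul_assoc]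
    field_simp
  rw [exp_neg_mul_struveL0_eq, hgauss]
  set G := ∫ s in (0 : ℝ)..π / 4, exp (-(2 * z) * sin s ^ 2)
  set R := ∫ θ in (0 : ℝ)..π / 2, exp (-(z * cos θ))
  calc |2 / π * G - exp (-z) / π * R - 2 / π * (√(π / (2 * z)) / 2)|
      = |2 / π * (G - √(π / (2 * z)) / 2) - exp (-z) * R / π| := by ring_nf
    _ ≤ 2 / π * |G - √(π / (2 * z)) / 2| + exp (-z) * R / π := by
        refine (abs_sub _ _).trans ?_
        rw [abs_mul, abs_of_pos (show 0 < 2 / π by positivity),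
          abs_of_nonneg (show 0 ≤ exp (-z) * R / π by have := hR.1; positivity)]
    _ ≤ 2 / π * (13 / (2 * z)) + 1 / z * (π / 2) / π := by
        gcongr
        · exact hR.1
        · exact hR.2
    _ = (13 / π + 1 / 2) / z := by field_simp
    _ ≤ 5 / z := by
        gcongr
        have : 13 / π ≤ 13 / 3 :=
          div_le_div_of_nonneg_left (by norm_num) (by norm_num) pi_gt_three.le
        linarith

theorem abs_one_div_sqrt_sub_one_div_sqrt_le {z y : ℝ} (hz : 1 ≤ z) (hzy : z ≤ y) :
    |1 / √(2 * π * z) - 1 / √(2 * π * y)| ≤ y - z := by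
  have hπ := pi_gt_three
  set a := √(2 * π * z)
  set b := √(2 * π * y)
  have ha2 : a ^ 2 = 2 * π * z := sq_sqrt (by positivity)
  have hb2 : b ^ 2 = 2 * π * y := sq_sqrt (by nlinarith)
  have ha : 2 ≤ a := le_sqrt_of_sq_le (by nlinarith)
  have hab : a ≤ b := sqrt_le_sqrt (by gcongr)
  have hb : 2 ≤ b := ha.trans hab
  have hcube : 2 * π ≤ a * b * (a + b) := by
    nlinarith [pi_lt_four, mul_le_mul ha hb zero_le_two (by linarith)]
  rw [abs_of_nonneg (sub_nonneg.mpr (one_div_le_one_div_of_le (by linarith) hab))]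
  calc 1 / a - 1 / b = (b - a) / (a * b) := by field_simp
    _ ≤ (b - a) * (a + b) / (2 * π) := by
        rw [div_le_div_iff₀ (by nlinarith) (by positivity)]
        nlinarith [mul_le_mul_of_nonneg_left hcube (sub_nonneg.mpr hab)]
    _ = y - z := by rw [div_eq_iff (by positivity)]; linear_combination hb2 - ha2

theorem abs_exp_neg_mul_struveL0_sub_le_of_le {z y : ℝ} (hz : 1 ≤ z) (hzy : z ≤ y) :
    |exp (-y) * struveL0 z - 1 / √(2 * π * y)| ≤ 5 / z + 2 * (y - z) := by
  set D := exp (-(y - z))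
  have hD0 : 0 < D := exp_pos _
  have hD1 : D ≤ 1 := exp_le_one_iff.mpr (by linarith)
  have hD : 1 - D ≤ y - z := by linarith [add_one_le_exp (-(y - z))]
  set g := 1 / √(2 * π * z)
  have hg0 : 0 ≤ g := by positivity
  have hg1 : g ≤ 1 := by
    rw [div_le_one (by positivity)]
    exact one_le_sqrt.mpr (by nlinarith [pi_gt_three])
  set F := exp (-z) * struveL0 z - g
  have hF : |F| ≤ 5 / z := abs_exp_neg_mul_struveL0_sub_le (by linarith)
  have hshift := abs_one_div_sqrt_sub_one_div_sqrt_le hz hzy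
  have hsplit : exp (-y) * struveL0 z - 1 / √(2 * π * y) =
      D * F - (1 - D) * g + (g - 1 / √(2 * π * y)) := by
    rw [show exp (-y) = D * exp (-z) by rw [← exp_add]; ring_nf]; ring
  rw [hsplit]
  calc _ ≤ |D * F| + |(1 - D) * g| + |g - 1 / √(2 * π * y)| :=
        (abs_add_le _ _).trans (add_le_add_left (abs_sub _ _) _)
    _ = D * |F| + (1 - D) * g + |g - 1 / √(2 * π * y)| := by
        rw [abs_mul, abs_mul, abs_of_pos hD0, abs_of_nonneg (sub_nonneg.mpr hD1), abs_of_nonneg hg0]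
    _ ≤ 1 * (5 / z) + (y - z) * 1 + (y - z) := by gcongr
    _ = 5 / z + 2 * (y - z) := by ring

theorem half_le_sqrt_sq_sub_sq {s x : ℝ} (h : 2 * |x| ≤ s) : s / 2 ≤ √(s ^ 2 - x ^ 2) := by
  have hx : x ^ 2 ≤ (s / 2) ^ 2 := by
    rw [← sq_abs]; exact pow_le_pow_left₀ (abs_nonneg x) (by linarith) 2
  exact le_sqrt_of_sq_le (by linarith [sq_nonneg s])

theorem sqrt_sq_sub_sq_le {s : ℝ} (hs : 0 ≤ s) (x : ℝ) : √(s ^ 2 - x ^ 2) ≤ s :=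
  (sqrt_le_sqrt (by linarith [sq_nonneg x])).trans_eq (sqrt_sq hs)

theorem sub_sqrt_sq_sub_sq_le {s x : ℝ} (hs : 0 < s) (hx : x ^ 2 ≤ s ^ 2) :
    s - √(s ^ 2 - x ^ 2) ≤ x ^ 2 / s := by
  have hw0 := sqrt_nonneg (s ^ 2 - x ^ 2)
  have hw2 := sq_sqrt (sub_nonneg.mpr hx)
  have hws := sqrt_sq_sub_sq_le hs.le x
  rw [le_div_iff₀ hs]
  nlinarith

theorem abs_exp_neg_mul_struveL0_hyperbola_sub_le {c lam x t : ℝ} (hc : 0 < c) (hlam : 0 < lam)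
    (hxt : 2 * |x| ≤ c * t) (hlt : 2 ≤ lam * t) :
    |exp (-(lam * t)) * struveL0 (lam / c * √((c * t) ^ 2 - x ^ 2)) - 1 / √(2 * π * (lam * t))| ≤
      (10 + 2 * (lam * x / c) ^ 2) / (lam * t) := by
  have hct : 0 < c * t := mul_pos hc (pos_of_mul_pos_right (by linarith) hlam.le)
  have hx2 : x ^ 2 ≤ (c * t) ^ 2 := by
    rw [← sq_abs]; exact pow_le_pow_left₀ (abs_nonneg x) (by linarith [abs_nonneg x]) 2
  have hw := half_le_sqrt_sq_sub_sq hxt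
  have hgap := sub_sqrt_sq_sub_sq_le hct hx2
  have hwle := sqrt_sq_sub_sq_le hct.le x
  set w := √((c * t) ^ 2 - x ^ 2)
  have hz : lam * t / 2 ≤ lam / c * w := by
    calc lam * t / 2 = lam / c * (c * t / 2) := by field_simp
      _ ≤ lam / c * w := by gcongr
  have hzy : lam / c * w ≤ lam * t := by
    calc lam / c * w ≤ lam / c * (c * t) := by gcongr
      _ = lam * t := by field_simp
  calc _ ≤ 5 / (lam / c * w) + 2 * (lam * t - lam / c * w) :=
        abs_exp_neg_mul_struveL0_sub_le_of_le (by linarith) hzy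
    _ ≤ 5 / (lam * t / 2) + 2 * (lam / c * (x ^ 2 / (c * t))) := by
        gcongr
        calc lam * t - lam / c * w = lam / c * (c * t - w) := by field_simp
          _ ≤ lam / c * (x ^ 2 / (c * t)) := by gcongr
    _ = (10 + 2 * (lam * x / c) ^ 2) / (lam * t) := by field_simp; ring

theorem marginal_term_asymptotics (c lam x : ℝ) (hc : 0 < c) (hlam : 0 < lam) :
    ∃ C > 0, ∃ T > |x| / c, ∀ t ≥ T,
      |(Real.exp (-(lam * t)) / (Real.pi * Real.sqrt (c ^ 2 * t ^ 2 - x ^ 2)) +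
            lam * Real.exp (-(lam * t)) / (2 * c) *
              struveL0 (lam / c * Real.sqrt (c ^ 2 * t ^ 2 - x ^ 2))) -
          1 / (2 * c) * Real.sqrt (lam / (2 * Real.pi * t))| ≤ C * t⁻¹ := by
  have hxc : 0 ≤ |x| / c := by positivity
  have hlam2 : 0 < 2 / lam := by positivity
  refine ⟨(2 / π + 5 + (lam * x / c) ^ 2) / c, by positivity, 2 * (|x| / c) + 2 / lam,
    by linarith, fun t ht => ?_⟩
  have ht0 : 0 < t := by linarith
  have hxt : 2 * |x| ≤ c * t := (div_le_iff₀' hc).mp (by rw [mul_div_assoc]; linarith)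
  have hlt : 2 ≤ lam * t := (div_le_iff₀' hlam).mp (by linarith)
  have hstruve := abs_exp_neg_mul_struveL0_hyperbola_sub_le hc hlam hxt hlt
  have hw := half_le_sqrt_sq_sub_sq hxt
  rw [show c ^ 2 * t ^ 2 = (c * t) ^ 2 by ring, sqrt_div_mul_eq_mul_one_div_sqrt hlam]
  set w := √((c * t) ^ 2 - x ^ 2)
  have hw0 : 0 < w := by linarith [mul_pos hc ht0]
  set E := exp (-(lam * t))
  have hE : E ≤ 1 := exp_le_one_iff.mpr (by linarith)
  calc _ = |E / (π * w) + lam / (2 * c) *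
        (E * struveL0 (lam / c * w) - 1 / √(2 * π * (lam * t)))| := by ring_nf
    _ ≤ E / (π * w) + lam / (2 * c) *
        |E * struveL0 (lam / c * w) - 1 / √(2 * π * (lam * t))| := by
      refine (abs_add_le _ _).trans_eq ?_
      rw [abs_mul, abs_of_pos (by positivity : 0 < lam / (2 * c)),
        abs_of_pos (by positivity : 0 < E / (π * w))]
    _ ≤ 1 / (π * (c * t / 2)) + lam / (2 * c) * ((10 + 2 * (lam * x / c) ^ 2) / (lam * t)) := by
      gcongr
    _ = (2 / π + 5 + (lam * x / c) ^ 2) / c * t⁻¹ := by field_simp; ring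
end

section
/- For every real z, the series Σ_{k=0}^∞ ((−1)^k/(2k+1))·I_{2k+1}(z) converges and L₀(z) = (4/π)·Σ_{k=0}^∞ ((−1)^k/(2k+1))·I_{2k+1}(z), where L₀ is the modified Struve function of order zero and I_{2k+1} are the modified Bessel functions of the first kind of odd integer orders. -/
open Real Filter Topology

/-!
Expand each `I_{2k+1}(z)` into its power series to get a double series in `(k, j)`; it converges
absolutely, being dominated termwise by `|z/2|` times a product of two exponential series. Summing
it by rows gives the Bessel series. Summing it along the antidiagonals `k + j = n` gives
`(z/2)^{2n+1} ∑_{k ≤ n} (-1)^k / ((2k+1) (n-k)! (n+k+1)!)`, and this finite sum equals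
`4^n / ((2n+1)‼)^2 = π / (4 Γ(n+3/2)^2)` by a creative-telescoping recurrence in `n`.
-/

open Finset Nat

theorem pi_div_four_mul_one_div_Gamma_nat_add_three_halves_sq (n : ℕ) :
    π / 4 * (1 / Gamma ((n : ℝ) + 3 / 2) ^ 2) = 4 ^ n / ((2 * n + 1)‼ : ℝ) ^ 2 := by
  rw [show (n : ℝ) + 3 / 2 = n + 1 + 1 / 2 by ring, Gamma_nat_add_one_add_half]
  have : ((2 * n + 1)‼ : ℝ) ≠ 0 := by positivity
  field_simp
  rw [sq_sqrt pi_pos.le, ← pow_mul, pow_mul']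
  norm_num
  ring

noncomputable def diagonalTerm (n k : ℕ) : ℝ :=
  (-1) ^ k / ((2 * k + 1) * (n - k)! * (n + k + 1)!)

-- Zeilberger certificate for the recurrence `sum_diagonalTerm_succ`.
noncomputable def diagonalCert (n k : ℕ) : ℝ :=
  (-1) ^ (k + 1) * k / ((2 * n + 3) ^ 2 * (n + 1) * (n + 1 - k)! * (n + k + 1)!)

theorem diagonalTerm_succ_sub (n k : ℕ) (hk : k ≤ n) :
    diagonalTerm (n + 1) k - 4 / (2 * n + 3) ^ 2 * diagonalTerm n k =
      diagonalCert n (k + 1) - diagonalCert n k := by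
  obtain ⟨m, rfl⟩ := Nat.exists_eq_add_of_le hk
  simp only [diagonalTerm, diagonalCert]
  rw [show k + m + 1 - k = m + 1 by omega, show k + m - k = m by omega,
    show k + m + 1 - (k + 1) = m by omega, show k + m + 1 + k + 1 = (k + m + k + 1) + 1 by omega,
    show k + m + (k + 1) + 1 = (k + m + k + 1) + 1 by omega, factorial_succ, factorial_succ]
  push_cast
  field_simp
  ring

theorem diagonalTerm_succ_self (n : ℕ) :
    diagonalTerm (n + 1) (n + 1) = -diagonalCert n (n + 1) := by
  simp only [diagonalTerm, diagonalCert]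
  rw [Nat.sub_self, show n + 1 + (n + 1) + 1 = (n + (n + 1) + 1) + 1 by omega, factorial_succ]
  push_cast
  field_simp
  ring

theorem sum_diagonalTerm_succ (n : ℕ) :
    ∑ k ∈ range (n + 2), diagonalTerm (n + 1) k =
      4 / (2 * n + 3) ^ 2 * ∑ k ∈ range (n + 1), diagonalTerm n k := by
  have htele : ∑ k ∈ range (n + 1),
      (diagonalTerm (n + 1) k - 4 / (2 * n + 3) ^ 2 * diagonalTerm n k) =
        diagonalCert n (n + 1) := by
    rw [sum_congr rfl fun k hk => diagonalTerm_succ_sub n k (mem_range_succ_iff.mp hk),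
      sum_range_sub]
    simp [diagonalCert]
  rw [sum_range_succ, diagonalTerm_succ_self, ← htele, sum_sub_distrib, mul_sum]
  ring

theorem sum_diagonalTerm (n : ℕ) :
    ∑ k ∈ range (n + 1), diagonalTerm n k = 4 ^ n / ((2 * n + 1)‼ : ℝ) ^ 2 := by
  induction n with
  | zero => simp [diagonalTerm]
  | succ n ih =>
    rw [sum_diagonalTerm_succ, ih, show 2 * (n + 1) + 1 = 2 * n + 1 + 2 by ring,
      doubleFactorial_add_two]
    have : ((2 * n + 1)‼ : ℝ) ≠ 0 := by positivity
    push_cast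
    field_simp
    ring

theorem HasSum.sum_antidiagonal {α A : Type*} [AddCommMonoid α] [TopologicalSpace α]
    [ContinuousAdd α] [RegularSpace α] [AddMonoid A] [HasAntidiagonal A]
    {f : A × A → α} {a : α} (hf : HasSum f a) :
    HasSum (fun n => ∑ p ∈ antidiagonal n, f p) a := by
  rw [← HasAntidiagonal.sigmaAntidiagonalEquivProd.hasSum_iff] at hf
  refine hf.sigma fun n => ?_
  rw [← sum_coe_sort]
  exact hasSum_fintype _

noncomputable def besselDoubleTerm (z : ℝ) (p : ℕ × ℕ) : ℝ :=
  (-1) ^ p.1 / (2 * p.1 + 1) *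
    ((1 / (p.2 ! * (p.2 + (2 * p.1 + 1))! : ℝ)) * (z / 2) ^ (2 * p.2 + (2 * p.1 + 1)))

theorem abs_besselDoubleTerm_le (z : ℝ) (k j : ℕ) :
    |besselDoubleTerm z (k, j)| ≤
      |z / 2| * (((z / 2) ^ 2) ^ k / k ! * (((z / 2) ^ 2) ^ j / j !)) := by
  have hpow :
      |z / 2| ^ (2 * j + (2 * k + 1)) = |z / 2| * ((z / 2) ^ 2) ^ k * ((z / 2) ^ 2) ^ j := by
    rw [← sq_abs, ← pow_mul, ← pow_mul]; ring
  have hcoef : |(-1 : ℝ) ^ k / (2 * k + 1)| ≤ 1 := by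
    rw [abs_div, abs_pow, abs_neg, abs_one, one_pow, abs_of_pos (by positivity)]
    exact div_le_one_of_le₀ (by linarith [(k.cast_nonneg : (0 : ℝ) ≤ k)]) (by positivity)
  have hfact : (1 : ℝ) / (j ! * (j + (2 * k + 1))!) ≤ 1 / (k ! * j !) := by
    rw [mul_comm (k ! : ℝ)]
    gcongr
    omega
  simp only [besselDoubleTerm, abs_mul, abs_pow, hpow, abs_of_pos (by positivity :
    (0 : ℝ) < 1 / (j ! * (j + (2 * k + 1))! : ℝ))]
  calc _ ≤ 1 * (1 / (k ! * j !) * (|z / 2| * ((z / 2) ^ 2) ^ k * ((z / 2) ^ 2) ^ j)) := by gcongr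
    _ = _ := by ring

theorem summable_besselDoubleTerm (z : ℝ) : Summable (besselDoubleTerm z) := by
  have hexp := Real.summable_pow_div_factorial ((z / 2) ^ 2)
  refine .of_norm_bounded ((hexp.mul_of_nonneg hexp ?_ ?_).mul_left |z / 2|) fun p =>
    abs_besselDoubleTerm_le z p.1 p.2 <;>
  exact fun n => by positivity

theorem hasSum_besselDoubleTerm_row (z : ℝ) (k : ℕ) :
    HasSum (fun j => besselDoubleTerm z (k, j))
      ((-1) ^ k / (2 * k + 1) * besselI (2 * k + 1) z) := by
  have hc : (-1 : ℝ) ^ k / (2 * k + 1) ≠ 0 := by positivity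
  have hrow := (summable_mul_left_iff hc).mp ((summable_besselDoubleTerm z).prod_factor k)
  exact hrow.hasSum.mul_left _

theorem sum_antidiagonal_besselDoubleTerm (z : ℝ) (n : ℕ) :
    ∑ p ∈ antidiagonal n, besselDoubleTerm z p =
      π / 4 * (1 / Gamma ((n : ℝ) + 3 / 2) ^ 2 * (z / 2) ^ (2 * n + 1)) := by
  rw [Nat.sum_antidiagonal_eq_sum_range_succ_mk, ← mul_assoc,
    pi_div_four_mul_one_div_Gamma_nat_add_three_halves_sq, ← sum_diagonalTerm, sum_mul]
  refine sum_congr rfl fun k hk => ?_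
  have hkn := mem_range_succ_iff.mp hk
  rw [besselDoubleTerm, diagonalTerm, show n - k + (2 * k + 1) = n + k + 1 by omega,
    show 2 * (n - k) + (2 * k + 1) = 2 * n + 1 by omega]
  field_simp

theorem struveL0_eq_bessel_series (z : ℝ) :
    HasSum (fun k : ℕ => (-1 : ℝ) ^ k / (2 * (k : ℝ) + 1) * besselI (2 * k + 1) z)
      (Real.pi / 4 * struveL0 z) := by
  have hsum := (summable_besselDoubleTerm z).hasSum
  have hrows := hsum.prod_fiberwise (hasSum_besselDoubleTerm_row z)
  have hdiagonals := hsum.sum_antidiagonal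
  simp only [sum_antidiagonal_besselDoubleTerm] at hdiagonals
  rwa [struveL0, ← tsum_mul_left, hdiagonals.tsum_eq]
end

section
/- Fix constants c > 0 and λ > 0 and a point x ∈ ℝ. For t > |x|/c, let f(x,t) = (λ·e^{-λ t}/(2c))·[ I₀((λ/c)·√(c²t² − x²)) + (ct/√(c²t² − x²))·I₁((λ/c)·√(c²t² − x²)) ] be the absolutely continuous part of the transition density of the Goldstein-Kac telegraph process. Then f(x,t) → 0 as t → ∞. -/
/-!
Since `(z/2)^(2k+n) / (k! (k+n)!) = a_k · z^(2k+n) / (2k+n)!` with `a_k = C(2k+n, k) / 2^(2k+n)`,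
the series of `Iₙ` is a subseries of the exponential series with coefficients `a_k → 0`
(a binomial coefficient over `2^m` is at most a central one over `4^(m/2)`, which is `O(1/√m)`).
So `e^{-z} Iₙ(z) → 0`: finitely many terms are polynomials killed by `e^{-z}`, and the others
contribute at most `ε eᶻ`. For large `t`, `ct/2 ≤ √(c²t² - x²) ≤ ct`, so the density is at most
`λ/(2c) · e^{-a} (I₀(a) + 2 I₁(a))` with `a = (λ/c) √(c²t² - x²) → ∞`.
-/

open Real Filter Topology

open Nat

theorem Nat.centralBinom_sq_mul_le (k : ℕ) : centralBinom k ^ 2 * (2 * k + 1) ≤ 16 ^ k := by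
  induction k with
  | zero => simp
  | succ k ih =>
    refine Nat.le_of_mul_le_mul_left (c := (k + 1) ^ 2) ?_ (by positivity)
    calc (k + 1) ^ 2 * (centralBinom (k + 1) ^ 2 * (2 * (k + 1) + 1))
        = ((k + 1) * centralBinom (k + 1)) ^ 2 * (2 * k + 3) := by ring
      _ = 4 * ((2 * k + 1) * (2 * k + 3)) * (centralBinom k ^ 2 * (2 * k + 1)) := by
        rw [succ_mul_centralBinom_succ]; ring
      _ ≤ 4 * ((2 * k + 2) * (2 * k + 2)) * 16 ^ k :=
        Nat.mul_le_mul (Nat.mul_le_mul_left 4 (by nlinarith)) ih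
      _ = (k + 1) ^ 2 * 16 ^ (k + 1) := by ring

theorem tendsto_centralBinom_div_four_pow :
    Tendsto (fun k : ℕ => (k.centralBinom : ℝ) / 4 ^ k) atTop (𝓝 0) := by
  have hsq : Tendsto (fun k : ℕ => ((k.centralBinom : ℝ) / 4 ^ k) ^ 2) atTop (𝓝 0) := by
    refine squeeze_zero (fun _ => by positivity) (fun k => ?_)
      tendsto_one_div_add_atTop_nhds_zero_nat
    have h : (k.centralBinom : ℝ) ^ 2 * (2 * k + 1) ≤ 16 ^ k := by
      exact_mod_cast Nat.centralBinom_sq_mul_le k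
    calc ((k.centralBinom : ℝ) / 4 ^ k) ^ 2 = (k.centralBinom : ℝ) ^ 2 / 16 ^ k := by
          rw [div_pow, ← pow_mul, mul_comm, pow_mul]; norm_num
      _ ≤ 1 / (2 * (k : ℝ) + 1) := by rwa [div_le_div_iff₀ (by positivity) (by positivity), one_mul]
      _ ≤ 1 / ((k : ℝ) + 1) := by gcongr; linarith
  have h := hsq.sqrt
  rw [Real.sqrt_zero] at h
  exact h.congr fun k => Real.sqrt_sq (by positivity)

theorem Nat.choose_mul_four_pow_half_le (m i : ℕ) :
    m.choose i * 4 ^ (m / 2) ≤ (m / 2).centralBinom * 2 ^ m := by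
  obtain ⟨j, rfl | rfl⟩ := m.even_or_odd'
  · rw [show 2 * j / 2 = j by omega, pow_mul]
    exact Nat.mul_le_mul_right _ (Nat.choose_le_centralBinom i j)
  · rw [show (2 * j + 1) / 2 = j by omega]
    have : (2 * j + 1).choose i ≤ 2 * j.centralBinom := by
      cases i with
      | zero => simp; have := j.centralBinom_pos; omega
      | succ i =>
        rw [Nat.choose_succ_succ]
        linarith [Nat.choose_le_centralBinom i j, Nat.choose_le_centralBinom (i + 1) j]
    calc (2 * j + 1).choose i * 4 ^ j ≤ 2 * j.centralBinom * 4 ^ j := Nat.mul_le_mul_right _ this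
      _ = j.centralBinom * 2 ^ (2 * j + 1) := by rw [pow_succ, pow_mul]; ring

theorem tendsto_choose_div_two_pow {α : Type*} {l : Filter α} {m i : α → ℕ}
    (hm : Tendsto m l atTop) :
    Tendsto (fun a => ((m a).choose (i a) : ℝ) / 2 ^ m a) l (𝓝 0) := by
  refine squeeze_zero (fun _ => by positivity) (fun a => ?_)
    (tendsto_centralBinom_div_four_pow.comp ((Nat.tendsto_div_const_atTop two_ne_zero).comp hm))
  have h := Nat.cast_le (α := ℝ).2 (Nat.choose_mul_four_pow_half_le (m a) (i a))
  push_cast at h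
  rw [Function.comp_apply, Function.comp_apply, div_le_div_iff₀ (by positivity) (by positivity)]
  exact h

theorem norm_tsum_mul_pow_div_factorial_le {ι : Type*} {e : ι → ℕ} (he : Function.Injective e)
    {a : ι → ℝ} {F : Finset ι} {δ : ℝ} (hδ : 0 ≤ δ) (hF : ∀ i ∉ F, |a i| ≤ δ) {z : ℝ}
    (hz : 0 ≤ z) :
    ‖∑' i, a i * (z ^ e i / (e i)!)‖ ≤ ∑ i ∈ F, |a i| * (z ^ e i / (e i)!) + δ * exp z := by
  classical
  have hw0 : ∀ i, 0 ≤ z ^ e i / (e i)! := fun i => by positivity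
  have hw : Summable fun i => z ^ e i / (e i)! :=
    (Real.summable_pow_div_factorial z).comp_injective he
  have hexp : ∑' i, z ^ e i / (e i)! ≤ exp z := by
    rw [Real.exp_eq_exp_ℝ, NormedSpace.exp_eq_tsum_div]
    exact tsum_comp_le_tsum_of_inj (Real.summable_pow_div_factorial z) (fun _ => by positivity) he
  have hhead : HasSum (fun i => if i ∈ F then |a i| * (z ^ e i / (e i)!) else 0)
      (∑ i ∈ F, |a i| * (z ^ e i / (e i)!)) := by
    rw [← Finset.sum_congr rfl fun i hi => if_pos hi]
    exact hasSum_sum_of_ne_finset_zero fun i hi => if_neg hi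
  refine (tsum_of_norm_bounded (hhead.add (hw.hasSum.mul_left δ)) fun i => ?_).trans (by gcongr)
  rw [norm_mul, Real.norm_eq_abs, Real.norm_of_nonneg (hw0 i)]
  split_ifs with hi
  · nlinarith [hw0 i]
  · nlinarith [hF i hi, hw0 i]

theorem tendsto_exp_neg_mul_tsum_mul_pow_div_factorial {ι : Type*} {e : ι → ℕ}
    (he : Function.Injective e) {a : ι → ℝ} (ha : Tendsto a cofinite (𝓝 0)) :
    Tendsto (fun z => exp (-z) * ∑' i, a i * (z ^ e i / (e i)!)) atTop (𝓝 0) := by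
  rw [NormedAddGroup.tendsto_nhds_zero]
  intro ε hε
  obtain ⟨F, hF⟩ : ∃ F : Finset ι, ∀ i ∉ F, |a i| ≤ ε / 2 := by
    have h := Filter.eventually_cofinite.1
      (ha.eventually (Metric.closedBall_mem_nhds 0 (half_pos hε)))
    exact ⟨h.toFinset, fun i hi => by simpa [Real.dist_eq] using hi⟩
  have hhead : Tendsto (fun z => exp (-z) * ∑ i ∈ F, |a i| * (z ^ e i / (e i)!)) atTop (𝓝 0) := by
    have h := tendsto_finsetSum F fun i _ =>
      (tendsto_pow_mul_exp_neg_atTop_nhds_zero (e i)).const_mul (|a i| / (e i)!)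
    simp only [mul_zero, Finset.sum_const_zero] at h
    refine h.congr fun z => ?_
    rw [Finset.mul_sum]
    exact Finset.sum_congr rfl fun i _ => by ring
  filter_upwards [hhead.eventually (gt_mem_nhds (half_pos hε)), eventually_ge_atTop 0]
    with z hz_head hz
  calc ‖exp (-z) * ∑' i, a i * (z ^ e i / (e i)!)‖
      ≤ exp (-z) * (∑ i ∈ F, |a i| * (z ^ e i / (e i)!) + ε / 2 * exp z) := by
        rw [norm_mul, Real.norm_of_nonneg (exp_pos _).le]
        gcongr
        exact norm_tsum_mul_pow_div_factorial_le he (half_pos hε).le hF hz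
    _ = exp (-z) * ∑ i ∈ F, |a i| * (z ^ e i / (e i)!) + ε / 2 := by
        rw [mul_add, exp_neg]; field_simp
    _ < ε := by linarith

theorem besselI_eq_tsum (n : ℕ) (z : ℝ) :
    besselI n z = ∑' k : ℕ, ((2 * k + n).choose k / 2 ^ (2 * k + n) : ℝ) *
      (z ^ (2 * k + n) / (2 * k + n)!) := by
  refine tsum_congr fun k => ?_
  have h : ((2 * k + n).choose k : ℝ) = (2 * k + n)! / (k ! * (k + n)!) := by
    rw [show 2 * k + n = k + (k + n) by ring]
    exact Nat.cast_add_choose ℝ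
  rw [h, div_pow]
  field_simp

theorem besselI_nonneg (n : ℕ) {z : ℝ} (hz : 0 ≤ z) : 0 ≤ besselI n z :=
  tsum_nonneg fun _ => by positivity

theorem tendsto_exp_neg_mul_besselI (n : ℕ) :
    Tendsto (fun z => exp (-z) * besselI n z) atTop (𝓝 0) := by
  simp_rw [besselI_eq_tsum]
  refine tendsto_exp_neg_mul_tsum_mul_pow_div_factorial (e := fun k => 2 * k + n)
    (fun j k h => by dsimp only at h; omega) ?_
  rw [Nat.cofinite_eq_atTop]
  exact tendsto_choose_div_two_pow
    (tendsto_atTop_mono (fun k => show k ≤ 2 * k + n by omega) tendsto_id)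

theorem half_mul_le_sqrt_sq_mul_sq_sub_sq {c t x : ℝ} (h : 2 * |x| ≤ c * t) :
    c * t / 2 ≤ √(c ^ 2 * t ^ 2 - x ^ 2) := by
  rw [Real.le_sqrt (by linarith [abs_nonneg x])] <;>
  nlinarith [sq_abs x, abs_nonneg x]

noncomputable def telegraphDensity (c lam x t : ℝ) : ℝ :=
  lam * exp (-(lam * t)) / (2 * c) *
    (besselI 0 (lam / c * √(c ^ 2 * t ^ 2 - x ^ 2)) +
      c * t / √(c ^ 2 * t ^ 2 - x ^ 2) * besselI 1 (lam / c * √(c ^ 2 * t ^ 2 - x ^ 2)))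

section telegraphDensity

variable {c lam x t : ℝ}

theorem telegraphDensity_nonneg (hc : 0 < c) (hlam : 0 < lam) (ht : 0 ≤ t) :
    0 ≤ telegraphDensity c lam x t :=
  mul_nonneg (by positivity) (add_nonneg (besselI_nonneg 0 (by positivity))
    (mul_nonneg (by positivity) (besselI_nonneg 1 (by positivity))))

theorem telegraphDensity_le (hc : 0 < c) (hlam : 0 < lam) (ht : 2 * |x| ≤ c * t) :
    telegraphDensity c lam x t ≤ lam / (2 * c) * (exp (-(lam / c * √(c ^ 2 * t ^ 2 - x ^ 2))) *
      (besselI 0 (lam / c * √(c ^ 2 * t ^ 2 - x ^ 2)) +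
        2 * besselI 1 (lam / c * √(c ^ 2 * t ^ 2 - x ^ 2)))) := by
  set s := √(c ^ 2 * t ^ 2 - x ^ 2)
  have hct : 0 ≤ c * t := by linarith [abs_nonneg x]
  have hs_ge : c * t / 2 ≤ s := half_mul_le_sqrt_sq_mul_sq_sub_sq ht
  have hs_le : s ≤ c * t := Real.sqrt_le_iff.2 ⟨hct, by nlinarith [sq_nonneg x]⟩
  have hratio : c * t / s ≤ 2 := div_le_of_le_mul₀ (by positivity) zero_le_two (by linarith)
  have hexp : exp (-(lam * t)) ≤ exp (-(lam / c * s)) := by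
    refine exp_le_exp.2 (neg_le_neg ?_)
    calc lam / c * s ≤ lam / c * (c * t) := by gcongr
      _ = lam * t := by field_simp
  have hI0 := besselI_nonneg 0 (by positivity : 0 ≤ lam / c * s)
  have hI1 := besselI_nonneg 1 (by positivity : 0 ≤ lam / c * s)
  calc telegraphDensity c lam x t
      ≤ lam * exp (-(lam / c * s)) / (2 * c) * (besselI 0 (lam / c * s) +
          2 * besselI 1 (lam / c * s)) := by
        unfold telegraphDensity
        gcongr
    _ = _ := by ring

end telegraphDensity

theorem telegraph_density_tendsto_zero (c lam x : ℝ) (hc : 0 < c) (hlam : 0 < lam) :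
    Filter.Tendsto
      (fun t : ℝ =>
        lam * Real.exp (-(lam * t)) / (2 * c) *
          (besselI 0 (lam / c * Real.sqrt (c ^ 2 * t ^ 2 - x ^ 2)) +
            c * t / Real.sqrt (c ^ 2 * t ^ 2 - x ^ 2) *
              besselI 1 (lam / c * Real.sqrt (c ^ 2 * t ^ 2 - x ^ 2))))
      Filter.atTop (nhds 0) := by
  change Tendsto (telegraphDensity c lam x) atTop (𝓝 0)
  have hlarge : ∀ᶠ t in atTop, 2 * |x| ≤ c * t :=
    (tendsto_id.const_mul_atTop hc).eventually_ge_atTop _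
  have harg : Tendsto (fun t => lam / c * √(c ^ 2 * t ^ 2 - x ^ 2)) atTop atTop := by
    refine tendsto_atTop_mono' _ (hlarge.mono fun t ht => ?_)
      ((tendsto_id.const_mul_atTop hlam).atTop_div_const two_pos)
    calc lam * id t / 2 = lam / c * (c * t / 2) := by simp only [id]; field_simp
      _ ≤ lam / c * √(c ^ 2 * t ^ 2 - x ^ 2) := by
        gcongr; exact half_mul_le_sqrt_sq_mul_sq_sub_sq ht
  have hbound : Tendsto (fun z => exp (-z) * (besselI 0 z + 2 * besselI 1 z)) atTop (𝓝 0) := by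
    simpa [mul_add, mul_left_comm] using
      (tendsto_exp_neg_mul_besselI 0).add ((tendsto_exp_neg_mul_besselI 1).const_mul 2)
  refine squeeze_zero' ((eventually_ge_atTop 0).mono fun t ht => telegraphDensity_nonneg hc hlam ht)
    (hlarge.mono fun t ht => telegraphDensity_le hc hlam ht) ?_
  simpa using (hbound.comp harg).const_mul (lam / (2 * c))
end

section
/- Fix constants c > 0 and λ > 0 and a point x ∈ ℝ. For t > |x|/c, let f(x,t) = (λ·e^{-λ t}/(2c))·[ I₀((λ/c)·√(c²t² − x²)) + (ct/√(c²t² − x²))·I₁((λ/c)·√(c²t² − x²)) ] (the absolutely continuous part of the transition density of the Goldstein-Kac telegraph process) and g(x,t) = e^{-λ t}/(π·√(c²t² − x²)) + (λ·e^{-λ t}/(2c))·[ I₀((λ/c)·√(c²t² − x²)) + L₀((λ/c)·√(c²t² − x²)) ] (the density of the marginals of the planar symmetric Markov random flight). Then the two densities are asymptotically equivalent as t → ∞: lim_{t→∞} g(x,t)/f(x,t) = 1. -/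
open Real Filter Topology

/-!
On `[0, π/2]` one has `π/2 · I₀(z) = ∫ cosh (z cos θ)`, `π/2 · I₁(z) = ∫ sinh (z cos θ) cos θ`
and `π/2 · L₀(z) = ∫ sinh (z cos θ)`: integrate the power series term by term against Wallis'
integrals. Hence `I₀ - L₀ = (2/π) ∫ e^{-z cos θ}` is bounded and `I₀ - I₁ = O(e^z / z)`, while the
mass of `cosh (z cos θ)` near `θ = 0` gives `I₀(z) ≥ e^{z - 1/2} / (π √z)`, so `e^z / z = o(I₀)`
and `L₀/I₀ → 1`, `I₁/I₀ → 1`. Dividing numerator and denominator of `g/f` by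
`(λ e^{-λt} / (2c)) I₀(z)`, with `z = (λ/c) √(c²t² - x²) → ∞` and `ct / √(c²t² - x²) → 1`, leaves
`(2 / (π z I₀) + 1 + L₀/I₀) / (1 + (ct / √(c²t² - x²)) I₁/I₀) → 2/2`.
-/

open intervalIntegral
open scoped Nat

lemma integral_cos_pow_add_two_zero_pi_div_two (n : ℕ) :
    ∫ θ in (0 : ℝ)..π / 2, cos θ ^ (n + 2) =
      (n + 1) / (n + 2) * ∫ θ in (0 : ℝ)..π / 2, cos θ ^ n := by
  simp [integral_cos_pow]

lemma integral_cos_pow_two_mul (k : ℕ) :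
    ∫ θ in (0 : ℝ)..π / 2, cos θ ^ (2 * k) = π / 2 * (2 * k)! / (4 ^ k * (k ! : ℝ) ^ 2) := by
  induction k with
  | zero => simp
  | succ k ih =>
    rw [show 2 * (k + 1) = 2 * k + 2 by ring, integral_cos_pow_add_two_zero_pi_div_two, ih]
    simp only [Nat.factorial_succ]
    push_cast
    field_simp
    ring

lemma integral_cos_pow_two_mul_add_one (k : ℕ) :
    ∫ θ in (0 : ℝ)..π / 2, cos θ ^ (2 * k + 1) = 4 ^ k * (k ! : ℝ) ^ 2 / (2 * k + 1)! := by
  induction k with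
  | zero => simp
  | succ k ih =>
    rw [show 2 * (k + 1) + 1 = 2 * k + 1 + 2 by ring, integral_cos_pow_add_two_zero_pi_div_two, ih]
    simp only [Nat.factorial_succ]
    push_cast
    field_simp
    ring

lemma hasSum_integral_mul_cos_pow {a : ℕ → ℝ} {f : ℝ → ℝ} (e : ℕ → ℕ)
    (ha : Summable fun k => |a k|) (hf : ∀ θ, HasSum (fun k => a k * cos θ ^ e k) (f θ))
    (l u : ℝ) :
    HasSum (fun k => a k * ∫ θ in l..u, cos θ ^ e k) (∫ θ in l..u, f θ) := by
  simp_rw [← intervalIntegral.integral_const_mul]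
  refine hasSum_integral_of_dominated_convergence (fun k _ => |a k|)
    (fun k => (by fun_prop : Continuous fun θ => a k * cos θ ^ e k).aestronglyMeasurable)
    (fun k => .of_forall fun θ _ => ?_) (.of_forall fun _ _ => ha) intervalIntegrable_const
    (.of_forall fun θ _ => hf θ)
  rw [norm_mul, norm_pow, Real.norm_eq_abs]
  exact mul_le_of_le_one_right (abs_nonneg _) (pow_le_one₀ (abs_nonneg _) (abs_cos_le_one θ))

lemma summable_abs_pow_two_mul_div_factorial (z : ℝ) :
    Summable fun k : ℕ => |z ^ (2 * k) / (2 * k)!| :=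
  (Real.hasSum_cosh |z|).summable.congr fun k => by simp [abs_div, abs_pow]

lemma summable_abs_pow_two_mul_add_one_div_factorial (z : ℝ) :
    Summable fun k : ℕ => |z ^ (2 * k + 1) / (2 * k + 1)!| :=
  (Real.hasSum_sinh |z|).summable.congr fun k => by simp [abs_div, abs_pow]

lemma Real.Gamma_nat_add_three_halves (k : ℕ) :
    Gamma (k + 3 / 2) = √π * (2 * k + 1)! / (2 ^ (2 * k + 1) * k !) := by
  have h := Real.Gamma_nat_add_half (k + 1)
  rw [Nat.factorial_eq_mul_doubleFactorial, Nat.doubleFactorial_two_mul]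
  push_cast at h ⊢
  rw [show (k : ℝ) + 3 / 2 = k + 1 + 1 / 2 by ring, h, show 2 * (k + 1) - 1 = 2 * k + 1 by omega]
  field_simp
  rw [← pow_add]
  ring_nf

lemma four_pow_eq_two_pow_two_mul (k : ℕ) : (4 : ℝ) ^ k = 2 ^ (2 * k) := by
  rw [pow_mul]; norm_num

theorem integral_cosh_mul_cos (z : ℝ) :
    ∫ θ in (0 : ℝ)..π / 2, cosh (z * cos θ) = π / 2 * besselI 0 z := by
  have h := hasSum_integral_mul_cos_pow (fun k => 2 * k)
    (summable_abs_pow_two_mul_div_factorial z)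
    (fun θ => (Real.hasSum_cosh (z * cos θ)).congr_fun fun k => by ring) 0 (π / 2)
  rw [← h.tsum_eq, besselI, ← tsum_mul_left]
  congr 1
  funext k
  simp only [add_zero]
  rw [integral_cos_pow_two_mul, div_pow, four_pow_eq_two_pow_two_mul]
  field_simp

theorem integral_sinh_mul_cos_mul_cos (z : ℝ) :
    ∫ θ in (0 : ℝ)..π / 2, sinh (z * cos θ) * cos θ = π / 2 * besselI 1 z := by
  have h := hasSum_integral_mul_cos_pow (fun k => 2 * (k + 1))
    (summable_abs_pow_two_mul_add_one_div_factorial z)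
    (fun θ => ((Real.hasSum_sinh (z * cos θ)).mul_right (cos θ)).congr_fun fun k => by ring)
    0 (π / 2)
  rw [← h.tsum_eq, besselI, ← tsum_mul_left]
  congr 1
  funext k
  rw [integral_cos_pow_two_mul, div_pow, four_pow_eq_two_pow_two_mul,
    show 2 * (k + 1) = 2 * k + 1 + 1 by ring]
  simp only [Nat.factorial_succ]
  push_cast
  field_simp
  ring

theorem integral_sinh_mul_cos (z : ℝ) :
    ∫ θ in (0 : ℝ)..π / 2, sinh (z * cos θ) = π / 2 * struveL0 z := by
  have h := hasSum_integral_mul_cos_pow (fun k => 2 * k + 1)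
    (summable_abs_pow_two_mul_add_one_div_factorial z)
    (fun θ => (Real.hasSum_sinh (z * cos θ)).congr_fun fun k => by ring) 0 (π / 2)
  rw [← h.tsum_eq, struveL0, ← tsum_mul_left]
  congr 1
  funext k
  rw [integral_cos_pow_two_mul_add_one, Real.Gamma_nat_add_three_halves, div_pow, div_pow, mul_pow,
    Real.sq_sqrt pi_pos.le, four_pow_eq_two_pow_two_mul]
  field_simp
  ring

lemma abs_le_of_integral_zero_pi_div_two_eq {g : ℝ → ℝ} {a B : ℝ}
    (h : ∫ θ in (0 : ℝ)..π / 2, g θ = π / 2 * a)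
    (hg : ∀ θ ∈ Set.Icc 0 (π / 2), |g θ| ≤ B) : |a| ≤ B := by
  have hpi : 0 < π / 2 := by positivity
  have hint := norm_integral_le_of_norm_le_const (f := g) fun θ hθ =>
    hg θ (Set.Ioc_subset_Icc_self (by rwa [Set.uIoc_of_le hpi.le] at hθ))
  rw [h, norm_mul, Real.norm_eq_abs, Real.norm_eq_abs, sub_zero, abs_of_pos hpi] at hint
  exact le_of_mul_le_mul_left (by linarith) hpi

lemma abs_besselI0_sub_struveL0_le {z : ℝ} (hz : 0 ≤ z) : |besselI 0 z - struveL0 z| ≤ 1 := by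
  refine abs_le_of_integral_zero_pi_div_two_eq (g := fun θ => exp (-(z * cos θ))) ?_ fun θ hθ => ?_
  · simp_rw [← cosh_sub_sinh]
    rw [integral_sub (by apply Continuous.intervalIntegrable; fun_prop)
      (by apply Continuous.intervalIntegrable; fun_prop), integral_cosh_mul_cos,
      integral_sinh_mul_cos, mul_sub]
  · have hcos : 0 ≤ cos θ := cos_nonneg_of_mem_Icc ⟨by linarith [hθ.1, pi_pos], hθ.2⟩
    rw [abs_of_pos (exp_pos _), exp_le_one_iff, neg_nonpos]
    positivity

lemma abs_cosh_mul_sub_sinh_mul_mul_le {z c : ℝ} (hz : 0 < z) (hc₀ : 0 ≤ c) (hc₁ : c ≤ 1) :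
    |cosh (z * c) - sinh (z * c) * c| ≤ 1 + exp z / z := by
  have hsplit : cosh (z * c) - sinh (z * c) * c =
      (1 + c) / 2 * exp (-(z * c)) + (1 - c) / 2 * exp (z * c) := by
    rw [cosh_eq, sinh_eq]; ring
  have hneg : exp (-(z * c)) ≤ 1 := exp_le_one_iff.2 (by nlinarith)
  -- `y e^{-z y} ≤ 1 / z` with `y = 1 - c`
  have hpos : (1 - c) * exp (z * c) ≤ exp z / z := by
    rw [le_div_iff₀ hz]
    calc (1 - c) * exp (z * c) * z = z * (1 - c) * exp (z * c) := by ring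
      _ ≤ exp (z * (1 - c)) * exp (z * c) := by
          gcongr; linarith [add_one_le_exp (z * (1 - c))]
      _ = exp z := by rw [← exp_add]; ring_nf
  have h1c : 0 ≤ (1 - c) * exp (z * c) := mul_nonneg (by linarith) (exp_pos _).le
  rw [hsplit, abs_of_nonneg (add_nonneg (by positivity) (by nlinarith))]
  nlinarith

lemma abs_besselI0_sub_besselI1_le {z : ℝ} (hz : 0 < z) :
    |besselI 0 z - besselI 1 z| ≤ 1 + exp z / z := by
  refine abs_le_of_integral_zero_pi_div_two_eq
    (g := fun θ => cosh (z * cos θ) - sinh (z * cos θ) * cos θ) ?_ fun θ hθ =>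
      abs_cosh_mul_sub_sinh_mul_mul_le hz
        (cos_nonneg_of_mem_Icc ⟨by linarith [hθ.1, pi_pos], hθ.2⟩) (cos_le_one θ)
  rw [integral_sub (by apply Continuous.intervalIntegrable; fun_prop)
    (by apply Continuous.intervalIntegrable; fun_prop), integral_cosh_mul_cos,
    integral_sinh_mul_cos_mul_cos, mul_sub]

lemma mul_exp_mul_cos_le_besselI0 {z δ : ℝ} (hz : 0 ≤ z) (hδ : δ ∈ Set.Icc 0 (π / 2)) :
    δ * exp (z * cos δ) ≤ π * besselI 0 z := by
  have hint (a b : ℝ) :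
      IntervalIntegrable (fun θ => cosh (z * cos θ)) MeasureTheory.volume a b := by
    apply Continuous.intervalIntegrable; fun_prop
  calc δ * exp (z * cos δ) = 2 * ∫ _ in (0 : ℝ)..δ, exp (z * cos δ) / 2 := by
        simp only [integral_div, integral_const, sub_zero, smul_eq_mul]; ring
    _ ≤ 2 * ∫ θ in (0 : ℝ)..δ, cosh (z * cos θ) := by
        gcongr
        refine integral_mono_on hδ.1 (by simp) (hint _ _) fun θ hθ => ?_
        have hcos : cos δ ≤ cos θ :=
          cos_le_cos_of_nonneg_of_le_pi hθ.1 (by linarith [hδ.2, pi_pos]) hθ.2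
        rw [cosh_eq]
        linarith [exp_le_exp.2 (mul_le_mul_of_nonneg_left hcos hz), exp_pos (-(z * cos θ))]
    _ ≤ 2 * ∫ θ in (0 : ℝ)..π / 2, cosh (z * cos θ) := by
        gcongr
        exact integral_mono_interval le_rfl hδ.1 hδ.2
          (.of_forall fun θ => (cosh_pos _).le) (hint _ _)
    _ = π * besselI 0 z := by rw [integral_cosh_mul_cos]; ring

lemma exp_sub_one_half_div_le_besselI0 {z : ℝ} (hz : 1 ≤ z) :
    exp (z - 1 / 2) / (π * √z) ≤ besselI 0 z := by
  have hsqrt : 1 ≤ √z := one_le_sqrt.2 hz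
  have hδ : (√z)⁻¹ ∈ Set.Icc 0 (π / 2) :=
    ⟨by positivity, (inv_le_one_of_one_le₀ hsqrt).trans (by linarith [pi_gt_three])⟩
  -- `cos δ ≥ 1 - δ² / 2` and `z δ² = 1`
  have hcos : z - 1 / 2 ≤ z * cos (√z)⁻¹ := by
    have h := one_sub_sq_div_two_le_cos (x := (√z)⁻¹)
    rw [inv_pow, sq_sqrt (by linarith)] at h
    calc z - 1 / 2 = z * (1 - z⁻¹ / 2) := by field_simp
      _ ≤ z * cos (√z)⁻¹ := by gcongr
  rw [div_le_iff₀ (by positivity)]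
  calc exp (z - 1 / 2) ≤ √z * ((√z)⁻¹ * exp (z * cos (√z)⁻¹)) := by
        rw [← mul_assoc, mul_inv_cancel₀ (by linarith : (0 : ℝ) < √z).ne', one_mul]
        exact exp_le_exp.2 hcos
    _ ≤ √z * (π * besselI 0 z) :=
        mul_le_mul_of_nonneg_left (mul_exp_mul_cos_le_besselI0 (by linarith) hδ) (sqrt_nonneg z)
    _ = besselI 0 z * (π * √z) := by ring

lemma besselI0_pos {z : ℝ} (hz : 1 ≤ z) : 0 < besselI 0 z :=
  lt_of_lt_of_le (by positivity) (exp_sub_one_half_div_le_besselI0 hz)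

lemma isLittleO_exp_div_self_besselI0 : (fun z => exp z / z) =o[atTop] besselI 0 := by
  have hlim : Tendsto (fun z => π * exp (1 / 2) / √z) atTop (𝓝 0) :=
    tendsto_const_nhds.div_atTop tendsto_sqrt_atTop
  refine Asymptotics.isLittleO_iff.2 fun ε hε => ?_
  filter_upwards [hlim.eventually (ge_mem_nhds hε), eventually_ge_atTop 1] with z hεz hz
  have hI := besselI0_pos hz
  rw [Real.norm_of_nonneg (by positivity), Real.norm_of_nonneg hI.le]
  calc exp z / z = π * exp (1 / 2) / √z * (exp (z - 1 / 2) / (π * √z)) := by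
        rw [exp_sub]
        field_simp
        rw [sq_sqrt (by linarith)]
    _ ≤ ε * besselI 0 z := by
        gcongr
        exact exp_sub_one_half_div_le_besselI0 hz

lemma one_le_exp_div_self {z : ℝ} (hz : 0 < z) : 1 ≤ exp z / z := by
  rw [le_div_iff₀ hz, one_mul]
  linarith [add_one_le_exp z]

lemma tendsto_div_besselI0_of_isBigO {f : ℝ → ℝ} (hf : f =O[atTop] fun z => exp z / z) :
    Tendsto (fun z => f z / besselI 0 z) atTop (𝓝 0) :=
  (hf.trans_isLittleO isLittleO_exp_div_self_besselI0).tendsto_div_nhds_zero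

lemma tendsto_div_besselI0_of_isBigO_sub {f : ℝ → ℝ}
    (hf : (fun z => besselI 0 z - f z) =O[atTop] fun z => exp z / z) :
    Tendsto (fun z => f z / besselI 0 z) atTop (𝓝 1) := by
  have h := (tendsto_div_besselI0_of_isBigO hf).const_sub 1
  rw [sub_zero] at h
  refine h.congr' ?_
  filter_upwards [eventually_ge_atTop 1] with z hz
  have := (besselI0_pos hz).ne'
  field_simp
  ring

lemma tendsto_inv_div_besselI0 : Tendsto (fun z => z⁻¹ / besselI 0 z) atTop (𝓝 0) := by
  refine tendsto_div_besselI0_of_isBigO (.of_bound 1 ?_)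
  filter_upwards [eventually_gt_atTop 0] with z hz
  rw [Real.norm_of_nonneg (by positivity), Real.norm_of_nonneg (by positivity), one_mul,
    inv_eq_one_div]
  exact div_le_div_of_nonneg_right (one_le_exp hz.le) hz.le

lemma tendsto_struveL0_div_besselI0 :
    Tendsto (fun z => struveL0 z / besselI 0 z) atTop (𝓝 1) := by
  refine tendsto_div_besselI0_of_isBigO_sub (.of_bound 1 ?_)
  filter_upwards [eventually_gt_atTop 0] with z hz
  rw [Real.norm_eq_abs, Real.norm_of_nonneg (by positivity), one_mul]
  exact (abs_besselI0_sub_struveL0_le hz.le).trans (one_le_exp_div_self hz)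

lemma tendsto_besselI1_div_besselI0 :
    Tendsto (fun z => besselI 1 z / besselI 0 z) atTop (𝓝 1) := by
  refine tendsto_div_besselI0_of_isBigO_sub (.of_bound 2 ?_)
  filter_upwards [eventually_gt_atTop 0] with z hz
  rw [Real.norm_eq_abs, Real.norm_of_nonneg (by positivity)]
  linarith [abs_besselI0_sub_besselI1_le hz, one_le_exp_div_self hz]

lemma tendsto_sqrt_sq_sub_sq_atTop (a : ℝ) : Tendsto (fun u => √(u ^ 2 - a ^ 2)) atTop atTop :=
  tendsto_sqrt_atTop.comp <| tendsto_atTop_add_const_right _ _ (tendsto_pow_atTop two_ne_zero)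

lemma tendsto_div_sqrt_sq_sub_sq (a : ℝ) : Tendsto (fun u => u / √(u ^ 2 - a ^ 2)) atTop (𝓝 1) := by
  have h : Tendsto (fun u => (√(1 - (a / u) ^ 2))⁻¹) atTop (𝓝 1) := by
    have ha : Tendsto (fun u => a / u) atTop (𝓝 0) := tendsto_const_nhds.div_atTop tendsto_id
    simpa using (((ha.pow 2).const_sub 1).sqrt).inv₀ (by norm_num)
  refine h.congr' ?_
  filter_upwards [eventually_gt_atTop 0] with u hu
  rw [show u ^ 2 - a ^ 2 = u ^ 2 * (1 - (a / u) ^ 2) by field_simp, sqrt_mul (sq_nonneg u),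
    sqrt_sq hu.le, div_mul_eq_div_div, div_self hu.ne', one_div]

lemma density_ratio_eq {c lam t s i₀ i₁ l₀ : ℝ} (hc : c ≠ 0) (hlam : lam ≠ 0) (hs : s ≠ 0)
    (hi₀ : i₀ ≠ 0) :
    (exp (-(lam * t)) / (π * s) + lam * exp (-(lam * t)) / (2 * c) * (i₀ + l₀)) /
        (lam * exp (-(lam * t)) / (2 * c) * (i₀ + c * t / s * i₁)) =
      (2 / π * ((lam / c * s)⁻¹ / i₀) + 1 + l₀ / i₀) / (1 + c * t / s * (i₁ / i₀)) := by
  have hk : lam * exp (-(lam * t)) / (2 * c) * i₀ ≠ 0 := by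
    have := exp_pos (-(lam * t)); positivity
  rw [← mul_div_mul_right _ _ (inv_ne_zero hk)]
  congr 1
  · field_simp
    ring
  · field_simp

theorem densities_asymptotically_equivalent (c lam x : ℝ) (hc : 0 < c) (hlam : 0 < lam) :
    Filter.Tendsto
      (fun t : ℝ =>
        (Real.exp (-(lam * t)) / (Real.pi * Real.sqrt (c ^ 2 * t ^ 2 - x ^ 2)) +
            lam * Real.exp (-(lam * t)) / (2 * c) *
              (besselI 0 (lam / c * Real.sqrt (c ^ 2 * t ^ 2 - x ^ 2)) +
                struveL0 (lam / c * Real.sqrt (c ^ 2 * t ^ 2 - x ^ 2)))) /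
          (lam * Real.exp (-(lam * t)) / (2 * c) *
            (besselI 0 (lam / c * Real.sqrt (c ^ 2 * t ^ 2 - x ^ 2)) +
              c * t / Real.sqrt (c ^ 2 * t ^ 2 - x ^ 2) *
                besselI 1 (lam / c * Real.sqrt (c ^ 2 * t ^ 2 - x ^ 2)))))
      Filter.atTop (nhds 1) := by
  simp_rw [← mul_pow]
  have hct : Tendsto (fun t => c * t) atTop atTop := tendsto_id.const_mul_atTop hc
  have hs := (tendsto_sqrt_sq_sub_sq_atTop x).comp hct
  have hz := hs.const_mul_atTop (div_pos hlam hc)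
  have hr := (tendsto_div_sqrt_sq_sub_sq x).comp hct
  have hlim := ((((tendsto_inv_div_besselI0.comp hz).const_mul (2 / π)).add_const 1).add
    (tendsto_struveL0_div_besselI0.comp hz)).div
    ((hr.mul (tendsto_besselI1_div_besselI0.comp hz)).const_add 1) (by norm_num)
  rw [show (2 / π * 0 + 1 + 1) / (1 + 1 * 1) = (1 : ℝ) by norm_num] at hlim
  refine hlim.congr' ?_
  filter_upwards [hs.eventually_gt_atTop 0, hz.eventually_ge_atTop 1] with t hst hzt
  exact (density_ratio_eq hc.ne' hlam.ne' hst.ne' (besselI0_pos hzt).ne').symm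
end

section
/- Fix constants c > 0 and λ > 0 and a point x ∈ ℝ. Define R(x,t) = (λ t / 2)·e^{-λ t}/√(c²t² − x²)·I₁((λ/c)·√(c²t² − x²)) and Q(x,t) = e^{-λ t}/(π·√(c²t² − x²)) + (λ·e^{-λ t}/(2c))·L₀((λ/c)·√(c²t² − x²)) for t > |x|/c. Then R(x,t) → 0 and Q(x,t) → 0 as t → ∞. -/
open Real Filter Topology

/-!
With `z = (λ/c)√(c²t² - x²) ≤ λt`, both terms are controlled by `e^{-z} I₁(z)`. Written against
the sinh series, `I₁(z) = ∑ r_k z^{2k+1}/(2k+1)!` with `r_k = (2k+1 choose k)/2^{2k+1} → 0`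
(indeed `r_k² (k+2) ≤ 1`), and averaging a null sequence against the weights
`e^{-z} z^{2k+1}/(2k+1)!`, whose total is `e^{-z} sinh z ≤ 1` and each of which tends to `0`, gives
a null limit. The Struve function needs no separate asymptotics: log-convexity of `Γ` gives
`L₀ ≤ (3/2) I₁` coefficientwise.
-/

open scoped Nat

lemma norm_tsum_mul_sinh_series_le {a : ℕ → ℝ} {z δ : ℝ} {N : ℕ} (hz : 0 ≤ z)
    (ha : ∀ k ≥ N, |a k| ≤ δ) :
    ‖∑' k, a k * (z ^ (2 * k + 1) / (2 * k + 1)!)‖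
      ≤ ∑ k ∈ Finset.range N, |a k| * (z ^ (2 * k + 1) / (2 * k + 1)!) + δ * sinh z := by
  set u : ℕ → ℝ := fun k => z ^ (2 * k + 1) / (2 * k + 1)!
  have hu : ∀ k, 0 ≤ u k := fun k => by positivity
  have hhead : HasSum (fun k => if k ∈ Finset.range N then |a k| * u k else 0)
      (∑ k ∈ Finset.range N, |a k| * u k) := by
    have : HasSum (fun k => if k ∈ Finset.range N then |a k| * u k else 0)
        (∑ k ∈ Finset.range N, if k ∈ Finset.range N then |a k| * u k else 0) :=
      hasSum_sum_of_ne_finset_zero fun k hk => if_neg hk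
    rwa [Finset.sum_congr rfl fun k hk => if_pos hk] at this
  refine tsum_of_norm_bounded (hhead.add ((hasSum_sinh z).mul_left δ)) fun k => ?_
  rw [norm_mul, norm_eq_abs, norm_eq_abs, abs_of_nonneg (hu k)]
  split_ifs with hk
  · nlinarith [(abs_nonneg (a N)).trans (ha N le_rfl), hu k]
  · simpa using mul_le_mul_of_nonneg_right (ha k (by simpa using hk)) (hu k)

theorem tendsto_exp_neg_mul_tsum_sinh_series {a : ℕ → ℝ} (ha : Tendsto a atTop (𝓝 0)) :
    Tendsto (fun z => exp (-z) * ∑' k, a k * (z ^ (2 * k + 1) / (2 * k + 1)!)) atTop (𝓝 0) := by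
  set u : ℝ → ℕ → ℝ := fun z k => z ^ (2 * k + 1) / (2 * k + 1)!
  rw [Metric.tendsto_atTop]
  intro ε hε
  obtain ⟨N, hN⟩ := Metric.tendsto_atTop.1 ha (ε / 2) (half_pos hε)
  have hhead : Tendsto (fun z => ∑ k ∈ Finset.range N, |a k| * (exp (-z) * u z k))
      atTop (𝓝 0) := by
    simpa using tendsto_finsetSum (Finset.range N) fun k _ =>
      (((tendsto_pow_mul_exp_neg_atTop_nhds_zero (2 * k + 1)).div_const
        ((2 * k + 1)! : ℝ)).const_mul |a k|).congr fun z => by ring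
  obtain ⟨Z, hZ⟩ := Metric.tendsto_atTop.1 hhead (ε / 2) (half_pos hε)
  refine ⟨max Z 0, fun z hz => ?_⟩
  have hsum := norm_tsum_mul_sinh_series_le (le_of_max_le_right hz) fun k hk =>
    (show |a k| < ε / 2 by simpa using hN k hk).le
  have hhead_lt := lt_of_abs_lt (by simpa using hZ z (le_of_max_le_left hz))
  have hsinh : exp (-z) * sinh z ≤ 1 :=
    calc exp (-z) * sinh z ≤ exp (-z) * exp z := by
          gcongr; linarith [cosh_add_sinh z, cosh_pos z]
      _ = 1 := by rw [← exp_add, neg_add_cancel, exp_zero]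
  calc dist (exp (-z) * ∑' k, a k * u z k) 0
      = exp (-z) * ‖∑' k, a k * u z k‖ := by simp [abs_of_pos (exp_pos _)]
    _ ≤ exp (-z) * (∑ k ∈ Finset.range N, |a k| * u z k + ε / 2 * sinh z) := by gcongr
    _ = ∑ k ∈ Finset.range N, |a k| * (exp (-z) * u z k) + ε / 2 * (exp (-z) * sinh z) := by
      rw [mul_add, Finset.mul_sum]
      congr 1
      · exact Finset.sum_congr rfl fun _ _ => by ring
      · ring
    _ < ε / 2 + ε / 2 * 1 := add_lt_add_of_lt_of_le hhead_lt (by gcongr)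
    _ = ε := by ring

/-- Log-convexity of `Γ` between `s` and `s + 1`. -/
theorem Real.Gamma_add_half_sq_le {s : ℝ} (hs : 0 < s) :
    Gamma (s + 1 / 2) ^ 2 ≤ s * Gamma s ^ 2 := by
  have hΓ := Gamma_pos_of_pos hs
  have h := Gamma_mul_add_mul_le_rpow_Gamma_mul_rpow_Gamma hs (by linarith : 0 < s + 1)
    (by norm_num : (0 : ℝ) < 1 / 2) (by norm_num : (0 : ℝ) < 1 / 2) (by norm_num)
  rw [show 1 / 2 * s + 1 / 2 * (s + 1) = s + 1 / 2 by ring, Gamma_add_one hs.ne',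
    ← sqrt_eq_rpow, ← sqrt_eq_rpow, ← sqrt_mul hΓ.le,
    show Gamma s * (s * Gamma s) = s * Gamma s ^ 2 by ring] at h
  exact (le_sqrt (Gamma_pos_of_pos (by linarith)).le (by positivity)).1 h

/-- `(2k+1 choose k) / 2^(2k+1)`: the `k`-th coefficient of `I₁` divided by that of `sinh`. -/
noncomputable def besselOneCoeffRatio (k : ℕ) : ℝ :=
  (2 * k + 1)! / (k ! * (k + 1)! * 2 ^ (2 * k + 1))

lemma besselOneCoeffRatio_nonneg (k : ℕ) : 0 ≤ besselOneCoeffRatio k := by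
  unfold besselOneCoeffRatio; positivity

lemma besselOneCoeffRatio_succ (k : ℕ) :
    besselOneCoeffRatio (k + 1) = (2 * k + 3) / (2 * (k + 2)) * besselOneCoeffRatio k := by
  simp only [besselOneCoeffRatio, show 2 * (k + 1) + 1 = 2 * k + 1 + 1 + 1 by ring,
    Nat.factorial_succ, pow_succ]
  push_cast
  field_simp
  ring

lemma sq_besselOneCoeffRatio_mul_le (k : ℕ) : besselOneCoeffRatio k ^ 2 * (k + 2) ≤ 1 := by
  induction k with
  | zero => norm_num [besselOneCoeffRatio]
  | succ k ih =>
    calc besselOneCoeffRatio (k + 1) ^ 2 * ((k + 1 : ℕ) + 2)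
        = besselOneCoeffRatio k ^ 2 * (k + 2)
            * ((2 * k + 3) ^ 2 * (k + 3) / (4 * (k + 2) ^ 3)) := by
          rw [besselOneCoeffRatio_succ]; push_cast; field_simp; ring
      _ ≤ 1 := mul_le_one₀ ih (by positivity) <| by
          rw [div_le_one (by positivity)]
          nlinarith

lemma besselOneCoeffRatio_le_sqrt (k : ℕ) : besselOneCoeffRatio k ≤ √(1 / (k + 1)) := by
  rw [le_sqrt (besselOneCoeffRatio_nonneg k) (by positivity), le_div_iff₀ (by positivity)]
  nlinarith [sq_besselOneCoeffRatio_mul_le k, sq_nonneg (besselOneCoeffRatio k)]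

lemma tendsto_besselOneCoeffRatio : Tendsto besselOneCoeffRatio atTop (𝓝 0) := by
  refine tendsto_of_tendsto_of_tendsto_of_le_of_le tendsto_const_nhds ?_
    besselOneCoeffRatio_nonneg besselOneCoeffRatio_le_sqrt
  simpa using tendsto_one_div_add_atTop_nhds_zero_nat.sqrt

lemma besselI_one_term_eq (z : ℝ) (k : ℕ) :
    1 / (k ! * (k + 1)! : ℝ) * (z / 2) ^ (2 * k + 1)
      = besselOneCoeffRatio k * (z ^ (2 * k + 1) / (2 * k + 1)!) := by
  rw [besselOneCoeffRatio, div_pow]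
  field_simp

lemma besselI_one_eq_tsum (z : ℝ) :
    besselI 1 z = ∑' k, besselOneCoeffRatio k * (z ^ (2 * k + 1) / (2 * k + 1)!) :=
  tsum_congr (besselI_one_term_eq z)

lemma summable_besselI_one {z : ℝ} (hz : 0 ≤ z) :
    Summable fun k : ℕ => 1 / (k ! * (k + 1)! : ℝ) * (z / 2) ^ (2 * k + 1) := by
  simp_rw [besselI_one_term_eq]
  refine (hasSum_sinh z).summable.of_nonneg_of_le (fun k => by
    have := besselOneCoeffRatio_nonneg k; positivity) fun k => ?_
  refine mul_le_of_le_one_left (by positivity) ((besselOneCoeffRatio_le_sqrt k).trans ?_)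
  exact sqrt_le_one.2 (div_le_one_of_le₀ (by linarith [k.cast_nonneg (α := ℝ)]) (by positivity))

lemma besselI_one_nonneg {z : ℝ} (hz : 0 ≤ z) : 0 ≤ besselI 1 z :=
  tsum_nonneg fun k => by positivity

lemma tendsto_exp_neg_mul_besselI_one :
    Tendsto (fun z => exp (-z) * besselI 1 z) atTop (𝓝 0) := by
  simpa only [besselI_one_eq_tsum] using
    tendsto_exp_neg_mul_tsum_sinh_series tendsto_besselOneCoeffRatio

lemma one_div_Gamma_sq_le (k : ℕ) :
    1 / Gamma (k + 3 / 2) ^ 2 ≤ 3 / 2 * (1 / (k ! * (k + 1)! : ℝ)) := by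
  have h := Gamma_add_half_sq_le (by positivity : (0 : ℝ) < k + 3 / 2)
  rw [show (k : ℝ) + 3 / 2 + 1 / 2 = (k + 1 : ℕ) + 1 by push_cast; ring, Gamma_nat_eq_factorial,
    Nat.factorial_succ] at h
  push_cast at h
  have hP : (2 / 3 : ℝ) * (k ! * (k + 1)!) ≤ Gamma (k + 3 / 2) ^ 2 := by
    rw [Nat.factorial_succ]; push_cast
    nlinarith [sq_nonneg (k ! : ℝ), mul_nonneg (k.cast_nonneg (α := ℝ)) (sq_nonneg (k ! : ℝ))]
  calc 1 / Gamma (k + 3 / 2) ^ 2 ≤ 1 / ((2 / 3 : ℝ) * (k ! * (k + 1)!)) :=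
        one_div_le_one_div_of_le (by positivity) hP
    _ = 3 / 2 * (1 / (k ! * (k + 1)! : ℝ)) := by field_simp

lemma struveL0_le_besselI_one {z : ℝ} (hz : 0 ≤ z) : struveL0 z ≤ 3 / 2 * besselI 1 z := by
  have hle : ∀ k : ℕ, 1 / Gamma (k + 3 / 2) ^ 2 * (z / 2) ^ (2 * k + 1)
      ≤ 3 / 2 * (1 / (k ! * (k + 1)! : ℝ) * (z / 2) ^ (2 * k + 1)) := fun k => by
    rw [← mul_assoc]; gcongr; exact one_div_Gamma_sq_le k
  have hsum := (summable_besselI_one hz).mul_left (3 / 2)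
  rw [besselI, ← tsum_mul_left]
  exact (hsum.of_nonneg_of_le (fun k => by positivity) hle).tsum_le_tsum hle hsum

lemma struveL0_nonneg {z : ℝ} (hz : 0 ≤ z) : 0 ≤ struveL0 z :=
  tsum_nonneg fun k => by positivity

section Composition

variable {α : Type*} {l : Filter α} {z w : α → ℝ}

lemma tendsto_exp_neg_mul_besselI_one_of_le (hz : Tendsto z l atTop)
    (hzw : ∀ᶠ t in l, z t ≤ w t) :
    Tendsto (fun t => exp (-w t) * besselI 1 (z t)) l (𝓝 0) := by
  refine tendsto_of_tendsto_of_tendsto_of_le_of_le' tendsto_const_nhds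
    (tendsto_exp_neg_mul_besselI_one.comp hz) ?_ ?_
  · filter_upwards [hz.eventually_ge_atTop 0] with t ht
    exact mul_nonneg (exp_pos _).le (besselI_one_nonneg ht)
  · filter_upwards [hz.eventually_ge_atTop 0, hzw] with t ht htw
    exact mul_le_mul_of_nonneg_right (exp_le_exp.2 (neg_le_neg htw))
      (besselI_one_nonneg ht)

lemma tendsto_exp_neg_mul_struveL0_of_le (hz : Tendsto z l atTop)
    (hzw : ∀ᶠ t in l, z t ≤ w t) :
    Tendsto (fun t => exp (-w t) * struveL0 (z t)) l (𝓝 0) := by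
  refine tendsto_of_tendsto_of_tendsto_of_le_of_le' tendsto_const_nhds
    (by simpa using (tendsto_exp_neg_mul_besselI_one_of_le hz hzw).const_mul (3 / 2)) ?_ ?_
  · filter_upwards [hz.eventually_ge_atTop 0] with t ht
    exact mul_nonneg (exp_pos _).le (struveL0_nonneg ht)
  · filter_upwards [hz.eventually_ge_atTop 0] with t ht
    calc exp (-w t) * struveL0 (z t) ≤ exp (-w t) * (3 / 2 * besselI 1 (z t)) := by
          gcongr; exact struveL0_le_besselI_one ht
      _ = 3 / 2 * (exp (-w t) * besselI 1 (z t)) := by ring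

end Composition

lemma sqrt_sq_mul_sq_sub_sq_le {c t : ℝ} (x : ℝ) (hc : 0 ≤ c) (ht : 0 ≤ t) :
    √(c ^ 2 * t ^ 2 - x ^ 2) ≤ c * t :=
  sqrt_le_iff.2 ⟨by positivity, by nlinarith [sq_nonneg x]⟩

lemma tendsto_sqrt_sq_mul_sq_sub_sq_div_self {c : ℝ} (x : ℝ) (hc : 0 ≤ c) :
    Tendsto (fun t => √(c ^ 2 * t ^ 2 - x ^ 2) / t) atTop (𝓝 c) := by
  have hlim : Tendsto (fun t : ℝ => √(c ^ 2 - (x / t) ^ 2)) atTop (𝓝 c) := by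
    simpa [sqrt_sq hc] using
      ((tendsto_const_nhds.sub ((tendsto_const_nhds.div_atTop tendsto_id).pow 2)).sqrt :
        Tendsto (fun t : ℝ => √(c ^ 2 - (x / t) ^ 2)) atTop (𝓝 √(c ^ 2 - 0 ^ 2)))
  refine hlim.congr' ?_
  filter_upwards [eventually_gt_atTop 0] with t ht
  rw [← sqrt_sq ht.le, ← sqrt_div' _ (sq_nonneg t), sqrt_sq ht.le]
  congr 1
  field_simp

theorem noncommon_terms_tendsto_zero (c lam x : ℝ) (hc : 0 < c) (hlam : 0 < lam) :
    Filter.Tendsto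
        (fun t : ℝ =>
          lam * t / 2 * Real.exp (-(lam * t)) / Real.sqrt (c ^ 2 * t ^ 2 - x ^ 2) *
            besselI 1 (lam / c * Real.sqrt (c ^ 2 * t ^ 2 - x ^ 2)))
        Filter.atTop (nhds 0) ∧
      Filter.Tendsto
        (fun t : ℝ =>
          Real.exp (-(lam * t)) / (Real.pi * Real.sqrt (c ^ 2 * t ^ 2 - x ^ 2)) +
            lam * Real.exp (-(lam * t)) / (2 * c) *
              struveL0 (lam / c * Real.sqrt (c ^ 2 * t ^ 2 - x ^ 2)))
        Filter.atTop (nhds 0) := by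
  have hs := tendsto_sqrt_sq_mul_sq_sub_sq_div_self x hc.le
  have hs_top : Tendsto (fun t => √(c ^ 2 * t ^ 2 - x ^ 2)) atTop atTop :=
    (hs.pos_mul_atTop hc tendsto_id).congr' <|
      (eventually_ne_atTop 0).mono fun t ht => div_mul_cancel₀ _ ht
  have hz := hs_top.const_mul_atTop (div_pos hlam hc)
  have hzw : ∀ᶠ t in atTop, lam / c * √(c ^ 2 * t ^ 2 - x ^ 2) ≤ lam * t := by
    filter_upwards [eventually_ge_atTop 0] with t ht
    calc lam / c * √(c ^ 2 * t ^ 2 - x ^ 2) ≤ lam / c * (c * t) := by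
          gcongr; exact sqrt_sq_mul_sq_sub_sq_le x hc.le ht
      _ = lam * t := by field_simp
  have hexp : Tendsto (fun t => exp (-(lam * t))) atTop (𝓝 0) :=
    tendsto_exp_neg_atTop_nhds_zero.comp (tendsto_id.const_mul_atTop hlam)
  have hinv := tendsto_inv_atTop_zero.comp (hs_top.const_mul_atTop pi_pos)
  constructor
  · have h := (tendsto_const_nhds (x := lam / 2)).div hs hc.ne' |>.mul
      (tendsto_exp_neg_mul_besselI_one_of_le hz hzw)
    rw [mul_zero] at h
    exact h.congr fun t => by simp only [Pi.div_apply, div_div_eq_mul_div]; ring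
  · have h := (hexp.mul hinv).add
      ((tendsto_exp_neg_mul_struveL0_of_le hz hzw).const_mul (lam / (2 * c)))
    rw [mul_zero, mul_zero, add_zero] at h
    exact h.congr fun t => by simp only [Function.comp_apply]; ring
end
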